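/- Let G be a finite A-group that is an internal semidirect product G = F ⋊ T, where F = F(G) is the Fitting subgroup of G and T is a complement. Then for every y ∈ T, F is the internal direct product F = C_F(y) × [F, y] of the fixed points of y on F and the commutator subgroup [F, y]. -/

import Mathlib

/-!
Common definitions: the set `N(G)` of conjugacy class sizes, `A`-groups,
the largest `p`-power `|G||_p` dividing an element of `N(G)`, the Fitting subgroup,
and the natural conjugation action of `G ⧸ H` on an abelian normal subgroup `H`
(used to form the semidirect product `H ⋊ G/H`).
-/

/-- `N(G)`: the set of conjugacy class sizes (indices of centralizers) of `G`. -/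
def indexSet (G : Type*) [Group G] : Set ℕ :=
  {n | ∃ x : G, n = (Subgroup.centralizer {x}).index}

/-- A finite group is an `A`-group if all its Sylow subgroups are abelian. -/
def IsAGroup (G : Type*) [Group G] : Prop :=
  ∀ (p : ℕ), p.Prime → ∀ P : Sylow p G, ∀ a b : (P : Subgroup G), a * b = b * a

/-- `|G||_p`: the highest power of `p` dividing some element of `N(G)`. -/
noncomputable def maxPPart (G : Type*) [Group G] (p : ℕ) : ℕ :=
  sSup {m | (∃ k : ℕ, m = p ^ k) ∧ ∃ n ∈ indexSet G, m ∣ n}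

open scoped Classical in
/-- The natural action of `G ⧸ H` on an abelian normal subgroup `H`, induced by
conjugation (`h ↦ g * h * g⁻¹`); it is used to form the semidirect product `H ⋊ G/H`.
(Junk value — the trivial action — if `H` is not abelian; see `quotConj_eq` below.) -/
noncomputable def quotConj (G : Type*) [Group G] (H : Subgroup G) [H.Normal] :
    G ⧸ H →* MulAut ↥H :=
  if h : H ≤ (MulAut.conjNormal (H := H)).ker then
    QuotientGroup.lift H MulAut.conjNormal h
  else 1

/-- When `H` is abelian, `quotConj` is indeed the conjugation action `h ↦ g * h * g⁻¹`. -/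
theorem quotConj_eq (G : Type*) [Group G] (H : Subgroup G) [H.Normal]
    (hab : ∀ a b : ↥H, a * b = b * a) (g : G) :
    quotConj G H (g : G ⧸ H) = MulAut.conjNormal g := by
  have hker : H ≤ (MulAut.conjNormal (H := H)).ker := by
    intro x hx
    rw [MonoidHom.mem_ker]
    ext y
    have h2 : x * (y : G) = (y : G) * x := congrArg Subtype.val (hab ⟨x, hx⟩ y)
    simp only [MulAut.conjNormal_apply, MulAut.one_apply]
    rw [mul_inv_eq_iff_eq_mul]
    exact h2
  rw [quotConj, dif_pos hker]
  rfl

/-- The Fitting subgroup: the join of all normal nilpotent subgroups. -/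
def fitting (G : Type*) [Group G] : Subgroup G :=
  ⨆ H ∈ {H : Subgroup G | H.Normal ∧ Group.IsNilpotent ↥H}, H

instance fitting_normal (G : Type*) [Group G] : (fitting G).Normal := by
  constructor
  intro n hn g
  rw [fitting, iSup_subtype'] at hn ⊢
  refine Subgroup.iSup_induction _
    (C := fun x => g * x * g⁻¹ ∈
      ⨆ H : {H : Subgroup G | H.Normal ∧ Group.IsNilpotent ↥H}, (H : Subgroup G))
    hn (fun H x hx => ?_) ?_ (fun x y hx hy => ?_)
  · exact Subgroup.mem_iSup_of_mem H (H.2.1.conj_mem x hx g)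
  · simpa using Subgroup.one_mem _
  · have h2 := Subgroup.mul_mem _ hx hy
    have h3 : g * (x * y) * g⁻¹ = (g * x * g⁻¹) * (g * y * g⁻¹) := by group
    show g * (x * y) * g⁻¹ ∈ _
    rwa [h3]

/-
In an `A`-group all normal `p`-subgroups lie in the abelian Sylow `p`-subgroups, and normal
subgroups of coprime orders commute. A normal nilpotent subgroup is generated by its Sylow
subgroups, which are normal `p`-subgroups of `G`, so the Fitting subgroup `F` is abelian.
Hence `a ↦ ⁅a, y⁆` is an endomorphism of `F` with kernel `C_F(y)` and image `[F, y]`, and in a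
finite group kernel and image are complements as soon as they meet trivially.
If `z = ⁅f, y⁆` commutes with `y`, fix a prime `p` and let `m` be the `p'`-part of `|G|`: then
`y ^ m` and `f ^ m` are `p`-elements of a common `p`-subgroup, so they commute, while
telescoping gives `⁅f ^ m, y ^ m⁆ = z ^ (m * m)`. So the order of `z` divides `m * m`, which is
prime to `p`, for every `p`.
-/

open Subgroup
open scoped commutatorElement

section

variable {G : Type*} [Group G]

theorem isPGroup_zpowers_of_pow_eq_one {p k : ℕ} {g : G} (h : g ^ p ^ k = 1) :
    IsPGroup p (zpowers g) := by
  rintro ⟨_, i, rfl⟩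
  refine ⟨k, Subtype.ext ?_⟩
  simp only [SubmonoidClass.coe_pow, OneMemClass.coe_one]
  rw [← zpow_natCast, ← zpow_mul, mul_comm, zpow_mul, zpow_natCast, h, one_zpow]

theorem Sylow.iSup_eq_top [Finite G] :
    ⨆ (p : ℕ) (_ : p.Prime) (P : Sylow p G), (P : Subgroup G) = ⊤ := by
  rw [← index_eq_one, Nat.eq_one_iff_not_exists_prime_dvd]
  intro p hp hdvd
  have : Fact p.Prime := ⟨hp⟩
  let P : Sylow p G := default
  have hle : (P : Subgroup G) ≤ ⨆ (p : ℕ) (_ : p.Prime) (P : Sylow p G), (P : Subgroup G) :=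
    le_iSup₂_of_le p hp (le_iSup_of_le P le_rfl)
  exact P.not_dvd_index (hdvd.trans (index_dvd_of_le hle))

theorem IsAGroup.commute_of_isPGroup (hA : IsAGroup G) {p : ℕ} (hp : p.Prime) {K : Subgroup G}
    (hK : IsPGroup p K) {a b : G} (ha : a ∈ K) (hb : b ∈ K) : Commute a b := by
  have : Fact p.Prime := ⟨hp⟩
  obtain ⟨P, hKP⟩ := hK.exists_le_sylow
  exact congrArg Subtype.val (hA p hp P ⟨a, hKP ha⟩ ⟨b, hKP hb⟩)

theorem IsAGroup.commute_of_mem_normal_isPGroup (hA : IsAGroup G) {p q : ℕ} (hp : p.Prime)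
    (hq : q.Prime) {M N : Subgroup G} [M.Normal] [N.Normal] (hM : IsPGroup p M)
    (hN : IsPGroup q N) {a b : G} (ha : a ∈ M) (hb : b ∈ N) : Commute a b := by
  obtain rfl | hpq := eq_or_ne p q
  · exact hA.commute_of_isPGroup hp (hM.to_sup_of_normal_right hN) (mem_sup_left ha)
      (mem_sup_right hb)
  · have : Fact p.Prime := ⟨hp⟩
    have : Fact q.Prime := ⟨hq⟩
    exact commute_of_normal_of_disjoint M N inferInstance inferInstance
      (IsPGroup.disjoint_of_ne p q hpq M N hM hN) a b ha hb

theorem Sylow.normal_map_subtype [Finite G] {H : Subgroup G} [H.Normal] [Group.IsNilpotent H]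
    {p : ℕ} [Fact p.Prime] (P : Sylow p H) : ((P : Subgroup H).map H.subtype).Normal := by
  have := P.characteristic_of_normal inferInstance
  infer_instance

def normalPrimaryElements (G : Type*) [Group G] : Set G :=
  {x | ∃ p, p.Prime ∧ ∃ N : Subgroup G, N.Normal ∧ IsPGroup p N ∧ x ∈ N}

theorem le_closure_normalPrimaryElements [Finite G] (H : Subgroup G) [H.Normal]
    [Group.IsNilpotent H] : H ≤ closure (normalPrimaryElements G) := by
  rw [← H.range_subtype, MonoidHom.range_eq_map, ← Sylow.iSup_eq_top]
  simp only [Subgroup.map_iSup, iSup_le_iff]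
  intro p hp P
  have : Fact p.Prime := ⟨hp⟩
  exact fun x hx => subset_closure ⟨p, hp, _, P.normal_map_subtype, P.isPGroup'.map _, hx⟩

theorem IsAGroup.isMulCommutative_fitting [Finite G] (hA : IsAGroup G) :
    IsMulCommutative (fitting G) := by
  have hcomm :
      ∀ x ∈ normalPrimaryElements G, ∀ z ∈ normalPrimaryElements G, x * z = z * x := by
    rintro x ⟨p, hp, M, hM, hMp, hx⟩ z ⟨q, hq, N, hN, hNq, hz⟩
    exact hA.commute_of_mem_normal_isPGroup hp hq hMp hNq hx hz
  have hle : fitting G ≤ closure (normalPrimaryElements G) :=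
    iSup₂_le fun H ⟨_, _⟩ => le_closure_normalPrimaryElements H
  have := isMulCommutative_closure hcomm
  exact .of_setLike_mul_comm fun a ha b hb => setLike_mul_comm (hle ha) (hle hb)

theorem IsAGroup.commute_of_pow_prime_pow_eq_one [Finite G] (hA : IsAGroup G) {H : Subgroup G}
    [H.Normal] [Group.IsNilpotent H] {p a b : ℕ} (hp : p.Prime) {c u : G} (hu : u ∈ H)
    (hc : c ^ p ^ a = 1) (hup : u ^ p ^ b = 1) : Commute c u := by
  have : Fact p.Prime := ⟨hp⟩
  have hu' : IsPGroup p (zpowers (⟨u, hu⟩ : H)) :=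
    isPGroup_zpowers_of_pow_eq_one (Subtype.ext hup)
  obtain ⟨P, hP⟩ := hu'.exists_le_sylow
  have := P.normal_map_subtype
  exact hA.commute_of_isPGroup hp
    ((isPGroup_zpowers_of_pow_eq_one hc).to_sup_of_normal_right (P.isPGroup'.map H.subtype))
    (mem_sup_left (mem_zpowers c)) (mem_sup_right ⟨_, hP (mem_zpowers _), rfl⟩)

theorem commutatorElement_pow_right_of_commute {u d : G} (h : Commute d ⁅u, d⁆) (n : ℕ) :
    ⁅u, d ^ n⁆ = ⁅u, d⁆ ^ n := by
  induction n with
  | zero => simp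
  | succ n ih =>
    rw [pow_succ, pow_succ, ← ih]
    calc ⁅u, d ^ n * d⁆ = u * d ^ n * u⁻¹ * (⁅u, d⁆ * (d ^ n)⁻¹) := by
          simp only [commutatorElement_def]; group
      _ = u * d ^ n * u⁻¹ * ((d ^ n)⁻¹ * ⁅u, d⁆) := by rw [← (h.pow_left n).inv_left.eq]
      _ = ⁅u, d ^ n⁆ * ⁅u, d⁆ := by simp only [commutatorElement_def]; group

theorem MonoidHom.isCompl_ker_range_of_disjoint [Finite G] (f : G →* G)
    (h : Disjoint f.ker f.range) : IsCompl f.ker f.range := by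
  refine ⟨h, codisjoint_iff.mpr (eq_top_iff.mpr fun x _ => ?_)⟩
  let g : f.range →* f.range := (f.comp f.range.subtype).codRestrict f.range fun a => ⟨a, rfl⟩
  have hg : Function.Injective g := (injective_iff_map_eq_one g).mpr fun a ha =>
    Subtype.ext (Subgroup.disjoint_def.mp h (Subtype.ext_iff.mp ha) a.2)
  obtain ⟨a, ha⟩ := (Finite.injective_iff_surjective.mp hg) ⟨f x, x, rfl⟩
  have hker : x * (a : G)⁻¹ ∈ f.ker := by
    rw [MonoidHom.mem_ker, map_mul, map_inv, mul_inv_eq_one]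
    exact (Subtype.ext_iff.mp ha).symm
  simpa using mul_mem_sup hker a.2

open scoped IsMulCommutative in
/-- `a ↦ ⁅a, y⁆`, written as `a ↦ a / (y a y⁻¹)` to make it visibly multiplicative. -/
def commutatorHom (F : Subgroup G) [F.Normal] [IsMulCommutative F] (y : G) : F →* F :=
  MonoidHom.id F / (MulAut.conjNormal y).toMonoidHom

open scoped IsMulCommutative in
theorem coe_commutatorHom_apply (F : Subgroup G) [F.Normal] [IsMulCommutative F] (y : G)
    (a : F) : (commutatorHom F y a : G) = ⁅(a : G), y⁆ := by
  rw [commutatorHom, MonoidHom.div_apply, div_eq_mul_inv]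
  simp [commutatorElement_def, mul_assoc]

theorem commutatorHom_apply_eq_one_iff (F : Subgroup G) [F.Normal] [IsMulCommutative F] (y : G)
    (a : F) : commutatorHom F y a = 1 ↔ Commute (a : G) y := by
  rw [← Subtype.val_inj, coe_commutatorHom_apply, OneMemClass.coe_one,
    commutatorElement_eq_one_iff_commute]

theorem commutatorElement_pow_left_of_mem (F : Subgroup G) [F.Normal] [IsMulCommutative F]
    (y : G) {f : G} (hf : f ∈ F) (n : ℕ) : ⁅f ^ n, y⁆ = ⁅f, y⁆ ^ n := by
  have := coe_commutatorHom_apply F y (⟨f, hf⟩ ^ n)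
  rw [map_pow, SubgroupClass.coe_pow, SubgroupClass.coe_pow, coe_commutatorHom_apply] at this
  exact this.symm

open scoped IsMulCommutative in
theorem IsAGroup.commutator_eq_one_of_commute [Finite G] (hA : IsAGroup G) {F : Subgroup G}
    [F.Normal] [IsMulCommutative F] {f y : G} (hf : f ∈ F) (hy : Commute y ⁅f, y⁆) :
    ⁅f, y⁆ = 1 := by
  rw [← orderOf_eq_one_iff, Nat.eq_one_iff_not_exists_prime_dvd]
  intro p hp hdvd
  set m := ordCompl[p] (Nat.card G)
  have hpow : ∀ g : G, (g ^ m) ^ p ^ (Nat.card G).factorization p = 1 := fun g => by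
    rw [← pow_mul, mul_comm, Nat.ordProj_mul_ordCompl_eq_self, pow_card_eq_one']
  have hcomm : Commute (y ^ m) (f ^ m) :=
    hA.commute_of_pow_prime_pow_eq_one hp (F.pow_mem hf m) (hpow y) (hpow f)
  have hpow_left := commutatorElement_pow_left_of_mem F y hf m
  have hpow_both : ⁅f ^ m, y ^ m⁆ = ⁅f, y⁆ ^ (m * m) := by
    rw [commutatorElement_pow_right_of_commute (hpow_left ▸ hy.pow_right m), hpow_left, pow_mul]
  have hm : ⁅f, y⁆ ^ (m * m) = 1 := by
    rw [← hpow_both, commutatorElement_eq_one_iff_commute]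
    exact hcomm.symm
  have hpm := hdvd.trans (orderOf_dvd_of_pow_eq_one hm)
  exact Nat.not_dvd_ordCompl hp Nat.card_pos.ne' ((hp.dvd_mul.mp hpm).elim id id)

theorem map_subtype_ker_commutatorHom (F : Subgroup G) [F.Normal] [IsMulCommutative F] (y : G) :
    (commutatorHom F y).ker.map F.subtype = centralizer {y} ⊓ F := by
  ext x
  simp only [mem_map, MonoidHom.mem_ker, commutatorHom_apply_eq_one_iff, mem_inf,
    mem_centralizer_singleton_iff]
  constructor
  · rintro ⟨a, ha, rfl⟩
    exact ⟨ha.eq, a.2⟩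
  · rintro ⟨hx, hxF⟩
    exact ⟨⟨x, hxF⟩, hx, rfl⟩

theorem map_subtype_range_commutatorHom (F : Subgroup G) [F.Normal] [IsMulCommutative F]
    (y : G) :
    (commutatorHom F y).range.map F.subtype = closure {z | ∃ f ∈ F, z = ⁅f, y⁆} := by
  suffices h :
      {z | ∃ f ∈ F, z = ⁅f, y⁆} = ((commutatorHom F y).range.map F.subtype : Set G) by
    rw [h, closure_eq]
  ext z
  simp only [Set.mem_ofPred_eq, SetLike.mem_coe, mem_map, MonoidHom.mem_range]
  constructor
  · rintro ⟨f, hf, rfl⟩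
    exact ⟨_, ⟨⟨f, hf⟩, rfl⟩, coe_commutatorHom_apply F y _⟩
  · rintro ⟨_, ⟨a, rfl⟩, rfl⟩
    exact ⟨a, a.2, coe_commutatorHom_apply F y a⟩

theorem IsAGroup.isCompl_ker_range_commutatorHom [Finite G] (hA : IsAGroup G) (F : Subgroup G)
    [F.Normal] [IsMulCommutative F] (y : G) :
    IsCompl (commutatorHom F y).ker (commutatorHom F y).range := by
  refine (commutatorHom F y).isCompl_ker_range_of_disjoint (disjoint_def.mpr ?_)
  rintro _ hker ⟨f, rfl⟩
  rw [MonoidHom.mem_ker, commutatorHom_apply_eq_one_iff, coe_commutatorHom_apply] at hker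
  rw [← Subtype.val_inj, coe_commutatorHom_apply]
  exact hA.commutator_eq_one_of_commute f.2 hker.symm

end

open scoped Pointwise commutatorElement in
theorem stmt_12_general (G : Type*) [Group G] [Finite G] (hA : IsAGroup G)
    (y : G) :
    (Subgroup.centralizer {y} ⊓ fitting G)
        ⊔ Subgroup.closure {z | ∃ f ∈ fitting G, z = ⁅f, y⁆} = fitting G ∧
    (Subgroup.centralizer {y} ⊓ fitting G)
        ⊓ Subgroup.closure {z | ∃ f ∈ fitting G, z = ⁅f, y⁆} = ⊥ ∧
    ∀ c ∈ Subgroup.centralizer {y} ⊓ fitting G,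
      ∀ d ∈ Subgroup.closure {z | ∃ f ∈ fitting G, z = ⁅f, y⁆}, c * d = d * c := by
  have := hA.isMulCommutative_fitting
  have hcompl := hA.isCompl_ker_range_commutatorHom (fitting G) y
  rw [← map_subtype_ker_commutatorHom, ← map_subtype_range_commutatorHom]
  refine ⟨?_, ?_, ?_⟩
  · rw [← Subgroup.map_sup, hcompl.sup_eq_top, ← MonoidHom.range_eq_map, range_subtype]
  · rw [← map_inf _ _ _ (fitting G).subtype_injective, hcompl.inf_eq_bot, Subgroup.map_bot]
  · rintro _ ⟨c, -, rfl⟩ _ ⟨d, -, rfl⟩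
    exact congrArg Subtype.val (mul_comm' c d)

open scoped Pointwise commutatorElement in
/-- Let `G` be a finite `A`-group with `G = F ⋊ T` an internal semidirect
product, `F = F(G)` the Fitting subgroup. Then for every `y ∈ T`, `F` is the internal
direct product `F = C_F(y) × [F, y]`. -/
theorem stmt_12 (G : Type*) [Group G] [Finite G] (hA : IsAGroup G)
    (T : Subgroup G) (hdisj : fitting G ⊓ T = ⊥)
    (hgen : (fitting G : Set G) * (T : Set G) = Set.univ)
    (y : G) (hy : y ∈ T) :
    (Subgroup.centralizer {y} ⊓ fitting G)
        ⊔ Subgroup.closure {z | ∃ f ∈ fitting G, z = ⁅f, y⁆} = fitting G ∧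
    (Subgroup.centralizer {y} ⊓ fitting G)
        ⊓ Subgroup.closure {z | ∃ f ∈ fitting G, z = ⁅f, y⁆} = ⊥ ∧
    ∀ c ∈ Subgroup.centralizer {y} ⊓ fitting G,
      ∀ d ∈ Subgroup.closure {z | ∃ f ∈ fitting G, z = ⁅f, y⁆}, c * d = d * c :=
  stmt_12_general G hA y
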